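/- The map fib is a strictly increasing bijection from the positive integers onto the set of fibbinary numbers: for every positive integer m with Zeckendorf representation m = F_{i_1} + F_{i_2} + ⋯ + F_{i_k} (distinct, nonconsecutive indices i_1 > i_2 > ⋯ > i_k ≥ 2), the number fib(m) := Σ_{j=1}^{k} 2^{i_j − 2} is the m-th positive integer (in increasing order) whose binary representation contains no two consecutive ones. -/

import Mathlib

/-- A natural number is *fibbinary* if its binary representation
contains no two consecutive ones. -/
def IsFibbinary (m : ℕ) : Prop :=
  ∀ i : ℕ, ¬(m.testBit i = true ∧ m.testBit (i + 1) = true)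

/-- `fibbin n` is the `n`-th fibbinary number, i.e. the `n`-th positive integer
(1-indexed, in increasing order) whose binary representation has no two
consecutive ones. -/
noncomputable def fibbin (n : ℕ) : ℕ :=
  Nat.nth (fun m => 0 < m ∧ IsFibbinary m) (n - 1)

/-- `odfib n` is the `n`-th odd fibbinary number
(1-indexed, in increasing order). -/
noncomputable def odfib (n : ℕ) : ℕ :=
  Nat.nth (fun m => Odd m ∧ IsFibbinary m) (n - 1)

/-- `Z n` is the index `j` such that the `j`-th fibbinary number equals the
`n`-th odd fibbinary number, i.e. `Z n = fibbin⁻¹ (odfib n)`. -/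
noncomputable def Z (n : ℕ) : ℕ :=
  sInf {j : ℕ | 1 ≤ j ∧ fibbin j = odfib n}

/-!
Writing `2 ^ (k + 1) * a + b` with `b < 2 ^ k` leaves a zero bit between the bits of `a` and
those of `b`, so the number is fibbinary exactly when `a` and `b` are. Splitting `[0, 2 ^ (k + 2))`
into `[0, 2 ^ (k + 1))`, `2 ^ (k + 1) + [0, 2 ^ k)` and a block whose bits `k`, `k + 1` are both
set, the fibbinary numbers below `2 ^ k` are counted by `fib (k + 2)`. Peeling off the largest
index of a Zeckendorf set `s` then shows that `∑ a ∈ s, 2 ^ (a - 2)` is fibbinary and exceeds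
exactly `∑ a ∈ s, fib a` fibbinary numbers (counting `0`), and `fibbin` inverts this count.
-/

open Finset Nat

theorem isFibbinary_zero : IsFibbinary 0 := by
  simp [IsFibbinary]

theorem isFibbinary_two_pow (k : ℕ) : IsFibbinary (2 ^ k) := by
  simp only [IsFibbinary, Nat.testBit_two_pow, decide_eq_true_eq]
  omega

theorem isFibbinary_one : IsFibbinary 1 :=
  isFibbinary_two_pow 0

theorem infinite_setOf_pos_isFibbinary : {m : ℕ | 0 < m ∧ IsFibbinary m}.Infinite :=
  Set.infinite_of_injective_forall_mem (Nat.pow_right_injective le_rfl)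
    fun k => ⟨Nat.two_pow_pos k, isFibbinary_two_pow k⟩

theorem isFibbinary_two_pow_succ_mul_add_iff {a b i : ℕ} (hb : b < 2 ^ i) :
    IsFibbinary (2 ^ (i + 1) * a + b) ↔ IsFibbinary a ∧ IsFibbinary b := by
  have hb' : b < 2 ^ (i + 1) := hb.trans (Nat.pow_lt_pow_succ one_lt_two)
  have low : ∀ j < i + 1, (2 ^ (i + 1) * a + b).testBit j = b.testBit j := fun j hj => by
    rw [Nat.testBit_two_pow_mul_add _ hb', if_pos hj]
  have high : ∀ j, (2 ^ (i + 1) * a + b).testBit (j + (i + 1)) = a.testBit j := fun j => by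
    rw [Nat.testBit_two_pow_mul_add _ hb', if_neg (by omega), Nat.add_sub_cancel]
  have b_high : ∀ j ≥ i, b.testBit j = false := fun j hj =>
    Nat.testBit_lt_two_pow (hb.trans_le (Nat.pow_le_pow_right two_pos hj))
  constructor
  · intro h
    refine ⟨fun j hj => h (j + (i + 1)) ?_, fun j hj => h j ?_⟩
    · rwa [high, Nat.add_right_comm, high]
    · obtain hji | hji := lt_or_ge j i
      · rwa [low j (by omega), low (j + 1) (by omega)]
      · simp [b_high j hji] at hj
  · rintro ⟨ha, hb⟩ j hj
    obtain hji | rfl | hji := lt_trichotomy j i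
    · rw [low j (by omega), low (j + 1) (by omega)] at hj
      exact hb j hj
    · simp [low j (by omega), b_high j le_rfl] at hj
    · obtain ⟨j, rfl⟩ : ∃ k, j = k + (i + 1) := ⟨j - (i + 1), by omega⟩
      rw [high, Nat.add_right_comm, high] at hj
      exact ha j hj

theorem isFibbinary_two_pow_succ_add_iff {k x : ℕ} (hx : x < 2 ^ k) :
    IsFibbinary (2 ^ (k + 1) + x) ↔ IsFibbinary x := by
  simpa [isFibbinary_one] using isFibbinary_two_pow_succ_mul_add_iff (a := 1) hx

theorem not_isFibbinary_two_pow_mul_three_add {k w : ℕ} (hw : w < 2 ^ k) :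
    ¬IsFibbinary (2 ^ k * 3 + w) := fun h => h k <| by
  simp only [Nat.testBit_two_pow_mul_add _ hw, lt_irrefl, if_false, Nat.sub_self,
    show ¬k + 1 < k by omega, Nat.add_sub_cancel_left]
  decide

theorem sum_two_pow_sub_two_lt {s : Finset ℕ} {n : ℕ} (h2 : ∀ a ∈ s, 2 ≤ a)
    (hn : ∀ a ∈ s, a + 1 < n) : ∑ a ∈ s, 2 ^ (a - 2) < 2 ^ (n - 3) := by
  rw [← sum_image fun a ha b hb _ => by have := h2 a ha; have := h2 b hb; omega]
  refine Nat.geomSum_lt le_rfl fun b hb => ?_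
  obtain ⟨a, ha, rfl⟩ := mem_image.1 hb
  have := h2 a ha; have := hn a ha
  omega

section Counting

open scoped Classical

theorem count_isFibbinary_two_pow_succ_add {k x : ℕ} (hx : x ≤ 2 ^ k) :
    count IsFibbinary (2 ^ (k + 1) + x) =
      count IsFibbinary (2 ^ (k + 1)) + count IsFibbinary x := by
  rw [count_add IsFibbinary]
  congr 1
  simp only [count_eq_card_filter_range]
  congr 1
  exact filter_congr fun z hz => isFibbinary_two_pow_succ_add_iff ((mem_range.1 hz).trans_le hx)

theorem count_isFibbinary_two_pow : ∀ k, count IsFibbinary (2 ^ k) = fib (k + 2)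
  | 0 => by simp [count_one, isFibbinary_zero]
  | 1 => by simp [count_succ, isFibbinary_zero, isFibbinary_one, fib_add_two]
  | k + 2 => by
    have top : count IsFibbinary (2 ^ (k + 2)) = count IsFibbinary (2 ^ (k + 1) + 2 ^ k) := by
      rw [show 2 ^ (k + 2) = 2 ^ (k + 1) + 2 ^ k + 2 ^ k by ring, count_add, Nat.add_eq_left]
      refine count_of_forall_not fun w hw => ?_
      rw [show 2 ^ (k + 1) + 2 ^ k + w = 2 ^ k * 3 + w by ring]
      exact not_isFibbinary_two_pow_mul_three_add hw
    rw [top, count_isFibbinary_two_pow_succ_add le_rfl, count_isFibbinary_two_pow k,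
      count_isFibbinary_two_pow (k + 1), add_comm, ← fib_add_two]

theorem isFibbinary_sum_two_pow_and_count_eq_sum_fib {s : Finset ℕ} (h2 : ∀ a ∈ s, 2 ≤ a)
    (hs : ∀ a ∈ s, a + 1 ∉ s) :
    IsFibbinary (∑ a ∈ s, 2 ^ (a - 2)) ∧
      count IsFibbinary (∑ a ∈ s, 2 ^ (a - 2)) = ∑ a ∈ s, fib a := by
  induction s using Finset.induction_on_max with
  | empty => simp [isFibbinary_zero]
  | insert n t hmax ih =>
    have hn : n ∉ t := fun h => lt_irrefl n (hmax n h)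
    have ht2 : ∀ a ∈ t, 2 ≤ a := fun a ha => h2 a (mem_insert_of_mem ha)
    have hgap : ∀ a ∈ t, a + 1 < n := fun a ha => by
      have := hmax a ha
      have : a + 1 ≠ n := fun h => hs a (mem_insert_of_mem ha) (h ▸ mem_insert_self n t)
      omega
    obtain ⟨htf, htc⟩ := ih ht2 fun a ha h => hs a (mem_insert_of_mem ha) (mem_insert_of_mem h)
    rw [sum_insert hn, sum_insert hn]
    obtain rfl | ⟨a, ha⟩ := t.eq_empty_or_nonempty
    · have := h2 n (mem_insert_self n ∅)
      refine ⟨by simpa using isFibbinary_two_pow (n - 2), ?_⟩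
      simpa [show n - 2 + 2 = n by omega] using count_isFibbinary_two_pow (n - 2)
    · obtain ⟨k, rfl⟩ : ∃ k, n = k + 3 := ⟨n - 3, by have := ht2 a ha; have := hgap a ha; omega⟩
      have hsum : ∑ a ∈ t, 2 ^ (a - 2) < 2 ^ k := by
        simpa using sum_two_pow_sub_two_lt ht2 hgap
      rw [show k + 3 - 2 = k + 1 by omega, isFibbinary_two_pow_succ_add_iff hsum,
        count_isFibbinary_two_pow_succ_add hsum.le, count_isFibbinary_two_pow, htc]
      exact ⟨htf, rfl⟩

theorem count_isFibbinary_eq_count_pos_add_one {x : ℕ} (hx : 0 < x) :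
    count IsFibbinary x = count (fun m => 0 < m ∧ IsFibbinary m) x + 1 := by
  obtain ⟨y, rfl⟩ := Nat.exists_eq_add_of_lt hx
  simp [count_succ', isFibbinary_zero]

theorem fibbin_count_isFibbinary {x : ℕ} (hx : 0 < x) (hfib : IsFibbinary x) :
    fibbin (count IsFibbinary x) = x := by
  rw [fibbin, count_isFibbinary_eq_count_pos_add_one hx, Nat.add_sub_cancel]
  exact nth_count ⟨hx, hfib⟩

end Counting

/-- `fibbin` is a strictly increasing bijection from the positive integers onto
the set of (positive) fibbinary numbers, and if a positive integer `m` has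
Zeckendorf representation `m = ∑_{a ∈ s} F_a` (where `s` is a nonempty set of
indices that are `≥ 2` and pairwise nonconsecutive), then
`fibbin m = ∑_{a ∈ s} 2^(a−2)`. -/
theorem fibbin_strictMono_bijOn_and_zeckendorf :
    StrictMonoOn fibbin {n : ℕ | 1 ≤ n} ∧
    Set.BijOn fibbin {n : ℕ | 1 ≤ n} {m : ℕ | 0 < m ∧ IsFibbinary m} ∧
    ∀ s : Finset ℕ, s.Nonempty → (∀ a ∈ s, 2 ≤ a) → (∀ a ∈ s, a + 1 ∉ s) →
      fibbin (∑ a ∈ s, Nat.fib a) = ∑ a ∈ s, 2 ^ (a - 2) := by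
  have hmono : StrictMonoOn fibbin {n : ℕ | 1 ≤ n} := fun a ha b _ hab =>
    nth_strictMono infinite_setOf_pos_isFibbinary (Nat.sub_lt_sub_right ha hab)
  refine ⟨hmono, ⟨fun n _ => nth_mem_of_infinite infinite_setOf_pos_isFibbinary _,
    hmono.injOn, fun x ⟨hx, hfib⟩ => ⟨_, ?_, fibbin_count_isFibbinary hx hfib⟩⟩, ?_⟩
  · simp [count_isFibbinary_eq_count_pos_add_one hx]
  · intro s hs h2 hgap
    obtain ⟨hfib, hcount⟩ := isFibbinary_sum_two_pow_and_count_eq_sum_fib h2 hgap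
    rw [← hcount]
    exact fibbin_count_isFibbinary (sum_pos (fun a _ => Nat.two_pow_pos _) hs) hfib
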